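/- Update formula when adding a point (Theorem 3): for i, j ∈ {1,…,n}, MMJ(Ω_i, Ω_j | Ω_{[1,n+1]}) = min( MMJ(Ω_i, Ω_j | Ω_{[1,n]}), max( MMJ(Ω_{n+1}, Ω_i | Ω_{[1,n+1]}), MMJ(Ω_{n+1}, Ω_j | Ω_{[1,n+1]}) ) ). -/

import Mathlib

/-- The maximum jump (distance between consecutive points) along a list of points. -/
def maxJump {α : Type*} (d : α → α → ℝ) : List α → ℝ
  | a :: b :: l => max (d a b) (maxJump d (b :: l))
  | _ => 0

/-- `L` is a path from `i` to `j` all of whose points lie in `S`. -/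
def IsPathIn {α : Type*} (S : Set α) (i j : α) (L : List α) : Prop :=
  L.head? = some i ∧ L.getLast? = some j ∧ ∀ x ∈ L, x ∈ S

/-- Min-Max-Jump distance between `i` and `j` under the context `S`. -/
noncomputable def MMJ {α : Type*} (d : α → α → ℝ) (S : Set α) (i j : α) : ℝ :=
  sInf {m : ℝ | ∃ L : List α, IsPathIn S i j L ∧ maxJump d L = m}

/-!
A path in `insert c S` either avoids `c`, and then lies in `S`, or passes through `c`, and then
splits at `c` into a path from `a` to `c` and one from `c` to `b`, whose maximal jumps combine
by `max`. Conversely, gluing near-optimal paths at `c` shows that `MMJ` satisfies the ultrametric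
inequality. With `S = Ω '' [1, n]` and `c = Ω (n + 1)` this is the update formula.
-/

section MMJ

variable {α : Type*} {d : α → α → ℝ} {S T : Set α} {a b c : α}

lemma maxJump_nonneg (hd : ∀ x y, 0 ≤ d x y) : ∀ L : List α, 0 ≤ maxJump d L
  | _ :: _ :: _ => (hd _ _).trans (le_max_left _ _)
  | [_] | [] => le_rfl

lemma maxJump_append_cons (hd : ∀ x y, 0 ≤ d x y) (L : List α) (c : α) (M : List α) :
    maxJump d (L ++ c :: M) = max (maxJump d (L ++ [c])) (maxJump d (c :: M)) := by
  induction L with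
  | nil => exact (max_eq_right (maxJump_nonneg hd _)).symm
  | cons x L ih =>
    cases L with
    | nil => simp only [List.cons_append, List.nil_append, maxJump, max_eq_left (hd x c)]
    | cons y L =>
      simp only [List.cons_append, maxJump] at ih ⊢
      rw [ih, max_assoc]

lemma maxJump_reverse (hd : ∀ x y, 0 ≤ d x y) (hsymm : ∀ x y, d x y = d y x) :
    ∀ L : List α, maxJump d L.reverse = maxJump d L
  | [] | [_] => rfl
  | x :: y :: L => by
    have hrev : (x :: y :: L).reverse = L.reverse ++ y :: [x] := by simp
    rw [hrev, maxJump_append_cons hd, ← List.reverse_cons, maxJump_reverse hd hsymm (y :: L)]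
    simp only [maxJump, hsymm y x]
    rw [max_eq_left (hd x y), max_comm]

lemma IsPathIn.reverse {L : List α} (h : IsPathIn S a b L) : IsPathIn S b a L.reverse :=
  ⟨by rw [List.head?_reverse]; exact h.2.1, by rw [List.getLast?_reverse]; exact h.1,
    fun x hx => h.2.2 x (List.mem_reverse.mp hx)⟩

lemma isPathIn_pair (ha : a ∈ S) (hb : b ∈ S) : IsPathIn S a b [a, b] :=
  ⟨rfl, rfl, by simp [ha, hb]⟩

lemma isPathIn_append_cons_iff {L M : List α} :
    IsPathIn S a b (L ++ c :: M) ↔ IsPathIn S a c (L ++ [c]) ∧ IsPathIn S c b (c :: M) := by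
  cases L <;> simp [IsPathIn, List.getLast?_cons, or_imp, forall_and] <;> tauto

lemma nonempty_maxJump_paths (ha : a ∈ S) (hb : b ∈ S) :
    {m | ∃ L, IsPathIn S a b L ∧ maxJump d L = m}.Nonempty :=
  ⟨_, _, isPathIn_pair ha hb, rfl⟩

lemma MMJ_le_maxJump (hd : ∀ x y, 0 ≤ d x y) {L : List α} (hL : IsPathIn S a b L) :
    MMJ d S a b ≤ maxJump d L :=
  csInf_le ⟨0, by rintro _ ⟨L, -, rfl⟩; exact maxJump_nonneg hd L⟩ ⟨L, hL, rfl⟩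

lemma le_MMJ {x : ℝ} (ha : a ∈ S) (hb : b ∈ S)
    (h : ∀ L, IsPathIn S a b L → x ≤ maxJump d L) : x ≤ MMJ d S a b :=
  le_csInf (nonempty_maxJump_paths ha hb) fun _ ⟨L, hL, hm⟩ => hm ▸ h L hL

lemma exists_isPathIn_maxJump_lt {x : ℝ} (ha : a ∈ S) (hb : b ∈ S) (h : MMJ d S a b < x) :
    ∃ L, IsPathIn S a b L ∧ maxJump d L < x := by
  obtain ⟨_, ⟨L, hL, rfl⟩, hlt⟩ := exists_lt_of_csInf_lt (nonempty_maxJump_paths ha hb) h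
  exact ⟨L, hL, hlt⟩

lemma MMJ_comm (hd : ∀ x y, 0 ≤ d x y) (hsymm : ∀ x y, d x y = d y x)
    (S : Set α) (a b : α) :
    MMJ d S a b = MMJ d S b a := by
  have key : ∀ a b, {m | ∃ L, IsPathIn S a b L ∧ maxJump d L = m} ⊆
      {m | ∃ L, IsPathIn S b a L ∧ maxJump d L = m} := by
    rintro a b _ ⟨L, hL, rfl⟩
    exact ⟨L.reverse, hL.reverse, maxJump_reverse hd hsymm L⟩
  exact congrArg sInf ((key a b).antisymm (key b a))

lemma MMJ_le_MMJ_of_subset (hd : ∀ x y, 0 ≤ d x y) (hST : S ⊆ T)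
    (ha : a ∈ S) (hb : b ∈ S) :
    MMJ d T a b ≤ MMJ d S a b :=
  le_MMJ ha hb fun _ hL => MMJ_le_maxJump hd ⟨hL.1, hL.2.1, fun x hx => hST (hL.2.2 x hx)⟩

lemma MMJ_le_max (hd : ∀ x y, 0 ≤ d x y) (ha : a ∈ S) (hb : b ∈ S) (hc : c ∈ S) :
    MMJ d S a b ≤ max (MMJ d S a c) (MMJ d S c b) := by
  refine le_of_forall_gt fun x hx => ?_
  obtain ⟨L, hL, hLx⟩ := exists_isPathIn_maxJump_lt ha hc (lt_of_le_of_lt (le_max_left _ _) hx)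
  obtain ⟨M, hM, hMx⟩ := exists_isPathIn_maxJump_lt hc hb (lt_of_le_of_lt (le_max_right _ _) hx)
  obtain ⟨L, rfl⟩ := List.getLast?_eq_some_iff.mp hL.2.1
  obtain ⟨M, rfl⟩ := List.head?_eq_some_iff.mp hM.1
  calc MMJ d S a b ≤ maxJump d (L ++ c :: M) :=
        MMJ_le_maxJump hd (isPathIn_append_cons_iff.mpr ⟨hL, hM⟩)
    _ < x := by rw [maxJump_append_cons hd]; exact max_lt hLx hMx

lemma max_MMJ_le_maxJump (hd : ∀ x y, 0 ≤ d x y) {L : List α} (hL : IsPathIn S a b L)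
    (hc : c ∈ L) : max (MMJ d S a c) (MMJ d S c b) ≤ maxJump d L := by
  obtain ⟨L, M, rfl⟩ := List.append_of_mem hc
  obtain ⟨hL, hM⟩ := isPathIn_append_cons_iff.mp hL
  rw [maxJump_append_cons hd]
  exact max_le_max (MMJ_le_maxJump hd hL) (MMJ_le_maxJump hd hM)

theorem MMJ_insert (hd : ∀ x y, 0 ≤ d x y) (hsymm : ∀ x y, d x y = d y x)
    (ha : a ∈ S) (hb : b ∈ S) :
    MMJ d (insert c S) a b =
      min (MMJ d S a b) (max (MMJ d (insert c S) c a) (MMJ d (insert c S) c b)) := by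
  rw [MMJ_comm hd hsymm _ c a]
  have ha' := Set.mem_insert_of_mem c ha
  have hb' := Set.mem_insert_of_mem c hb
  refine le_antisymm (le_min (MMJ_le_MMJ_of_subset hd (Set.subset_insert c S) ha hb)
    (MMJ_le_max hd ha' hb' (Set.mem_insert c S))) (le_MMJ ha' hb' fun L hL => ?_)
  by_cases hc : c ∈ L
  · exact (min_le_right _ _).trans (max_MMJ_le_maxJump hd hL hc)
  · refine (min_le_left _ _).trans (MMJ_le_maxJump hd ⟨hL.1, hL.2.1, fun x hx => ?_⟩)
    exact (hL.2.2 x hx).resolve_left (ne_of_mem_of_not_mem hx hc)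

end MMJ

theorem mmj_update_general {α : Type*} [MetricSpace α] (Ω : ℕ → α)
    (n : ℕ)
    (i j : ℕ) (hi : i ∈ Finset.Icc 1 n) (hj : j ∈ Finset.Icc 1 n) :
    MMJ dist (Ω '' Set.Icc 1 (n + 1)) (Ω i) (Ω j) =
      min (MMJ dist (Ω '' Set.Icc 1 n) (Ω i) (Ω j))
        (max (MMJ dist (Ω '' Set.Icc 1 (n + 1)) (Ω (n + 1)) (Ω i))
             (MMJ dist (Ω '' Set.Icc 1 (n + 1)) (Ω (n + 1)) (Ω j))) := by
  rw [← Set.insert_Icc_right_eq_Icc_add_one (by omega), Set.image_insert_eq]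
  exact MMJ_insert (fun _ _ => dist_nonneg) dist_comm
    (Set.mem_image_of_mem Ω (Finset.mem_Icc.1 hi)) (Set.mem_image_of_mem Ω (Finset.mem_Icc.1 hj))

theorem mmj_update {α : Type*} [MetricSpace α] (Ω : ℕ → α)
    (n : ℕ) (hn : 1 ≤ n) (hinj : Set.InjOn Ω (Set.Icc 1 (n + 1)))
    (i j : ℕ) (hi : i ∈ Finset.Icc 1 n) (hj : j ∈ Finset.Icc 1 n) :
    MMJ dist (Ω '' Set.Icc 1 (n + 1)) (Ω i) (Ω j) =
      min (MMJ dist (Ω '' Set.Icc 1 n) (Ω i) (Ω j))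
        (max (MMJ dist (Ω '' Set.Icc 1 (n + 1)) (Ω (n + 1)) (Ω i))
             (MMJ dist (Ω '' Set.Icc 1 (n + 1)) (Ω (n + 1)) (Ω j))) :=
  mmj_update_general Ω n i j hi hj
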